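/- Let ζ(i,m) ∈ [0,1] be defined for m ≥ 0 and 0 ≤ i < 2^m, satisfying ζ(i,m) ≤ 2ζ(i',m−1) − ζ(i',m−1)² when the last bit of i is 0 and ζ(i,m) ≤ ζ(i',m−1)² when it is 1, where i' is i with its last bit removed. Then for every β < 1/2, liminf_{m→∞} |{i : ζ(i,m) < 2^{−(2^m)^β}}| / 2^m ≥ 1 − ζ(0,0). -/

import Mathlib

/-!
Every `ζ` obeying the recursion is dominated by the erasure probabilities `Z` of the BEC with
`Z(0,0) = ζ(0,0) = c`, so it suffices to treat `Z`. The level sums of `Z` are `2^n c`, while those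
of `√(Z (1 - Z))` grow only like `√3^n`; by Markov's inequality a fraction `1 - c - o(1)` of the
indices at level `6u` has `Z ≤ 2^(-2u)`.

If `Z ≤ 2^e` at some index, appending `t` bits of which `w` are ones gives
`Z ≤ 2^(2^w (e + t - w))`: a zero at most doubles `Z`, a one squares it. By Chebyshev's inequality
almost all `t`-bit strings have about `t/2` ones. With `s ≈ εm`, a first round of `4s` bits with
at least `s` ones takes `Z ≤ 2^(-4s)` at level `12s` down to `Z ≤ 2^(-m)`, and a second round
through the remaining `m - 16s` bits with more than `βm` ones ends below `2^(-2^(βm))`.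
-/

open Filter Finset Topology

namespace ZetaPolarization

lemma sum_range_two_mul {M : Type*} [AddCommMonoid M] (f : ℕ → M) (n : ℕ) :
    ∑ i ∈ range (2 * n), f i = ∑ q ∈ range n, (f (2 * q) + f (2 * q + 1)) := by
  induction n with
  | zero => simp
  | succ n ih => rw [mul_add, mul_one, sum_range_succ, sum_range_succ, sum_range_succ, ih, add_assoc]

lemma sum_range_two_pow_succ {M : Type*} [AddCommMonoid M] (f : ℕ → M) (n : ℕ) :
    ∑ i ∈ range (2 ^ (n + 1)), f i = ∑ q ∈ range (2 ^ n), (f (2 * q) + f (2 * q + 1)) := by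
  rw [pow_succ', sum_range_two_mul]

lemma sum_sq_length_bitIndices_sub (t : ℕ) :
    ∑ r ∈ range (2 ^ t), ((r.bitIndices.length : ℝ) - t / 2) ^ 2 = (t : ℝ) * 2 ^ t / 4 := by
  induction t with
  | zero => simp
  | succ t ih =>
    have hpair : ∀ x : ℝ, (x - (t + 1) / 2) ^ 2 + (x + 1 - (t + 1) / 2) ^ 2
        = 2 * (x - t / 2) ^ 2 + 1 / 2 := fun x => by ring
    simp only [sum_range_two_pow_succ, Nat.bitIndices_two_mul, Nat.bitIndices_two_mul_add_one,
      List.length_map, List.length_cons, Nat.cast_succ, hpair, sum_add_distrib, ← mul_sum, ih,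
      sum_const, card_range, nsmul_eq_mul]
    push_cast
    ring

lemma sub_sub_le_mul_mul {p q r : ℝ} (hp1 : p ≤ 1) (hq0 : 0 ≤ q) (hq1 : q ≤ 1) (hr1 : r ≤ 1) :
    p - (1 - q) - (1 - r) ≤ p * q * r := by
  nlinarith [mul_nonneg (sub_nonneg.2 hq1) (sub_nonneg.2 hp1),
    mul_nonneg (sub_nonneg.2 hr1) (sub_nonneg.2 (mul_le_one₀ hp1 hq0 hq1))]

noncomputable def dyadicDensity (n : ℕ) (p : ℕ → Prop) [DecidablePred p] : ℝ :=
  #{i ∈ range (2 ^ n) | p i} / 2 ^ n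

section dyadicDensity

variable {n : ℕ} {p q : ℕ → Prop} [DecidablePred p] [DecidablePred q]

lemma dyadicDensity_nonneg : 0 ≤ dyadicDensity n p := by
  unfold dyadicDensity; positivity

lemma dyadicDensity_mono (h : ∀ i < 2 ^ n, p i → q i) : dyadicDensity n p ≤ dyadicDensity n q := by
  unfold dyadicDensity
  gcongr with i hi
  exact h i (mem_range.1 hi)

lemma dyadicDensity_le_one : dyadicDensity n p ≤ 1 := by
  unfold dyadicDensity
  rw [div_le_one (by positivity)]
  exact_mod_cast (card_filter_le _ _).trans (card_range _).le

lemma dyadicDensity_add_not : dyadicDensity n p + dyadicDensity n (¬ p ·) = 1 := by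
  unfold dyadicDensity
  rw [← add_div, div_eq_one_iff_eq (by positivity)]
  exact_mod_cast (card_filter_add_card_filter_not _).trans (card_range _)

end dyadicDensity

lemma card_mul_card_le_of_mul_add_mem {N : ℕ} {G R S : Finset ℕ} (hR : ∀ r ∈ R, r < N)
    (h : ∀ j ∈ G, ∀ r ∈ R, j * N + r ∈ S) : #G * #R ≤ #S := by
  rw [← card_product]
  refine card_le_card_of_injOn (fun x => x.1 * N + x.2) (fun x hx => ?_) fun x hx y hy hxy => ?_
  · rw [mem_coe, mem_product] at hx
    exact h _ hx.1 _ hx.2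
  · rw [mem_coe, mem_product] at hx hy
    have hx2 := hR _ hx.2
    have hy2 := hR _ hy.2
    have hdiv : x.1 = y.1 := by
      have := congrArg (· / N) hxy
      simp only at this
      rwa [mul_comm, Nat.mul_add_div (by omega), Nat.div_eq_of_lt hx2, mul_comm,
        Nat.mul_add_div (by omega), Nat.div_eq_of_lt hy2, add_zero, add_zero] at this
    exact Prod.ext hdiv (by simp only [hdiv] at hxy; omega)

lemma dyadicDensity_mul_le {n t : ℕ} {p q s : ℕ → Prop} [DecidablePred p] [DecidablePred q]
    [DecidablePred s] (h : ∀ j < 2 ^ n, p j → ∀ r < 2 ^ t, q r → s (j * 2 ^ t + r)) :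
    dyadicDensity n p * dyadicDensity t q ≤ dyadicDensity (n + t) s := by
  have hcard : #{j ∈ range (2 ^ n) | p j} * #{r ∈ range (2 ^ t) | q r}
      ≤ #{i ∈ range (2 ^ (n + t)) | s i} := by
    refine card_mul_card_le_of_mul_add_mem (fun r hr => mem_range.1 (mem_filter.1 hr).1) ?_
    intro j hj r hr
    rw [mem_filter, mem_range] at hj hr ⊢
    refine ⟨?_, h j hj.1 hj.2 r hr.1 hr.2⟩
    calc j * 2 ^ t + r < (j + 1) * 2 ^ t := by linarith [hr.1]
      _ ≤ 2 ^ n * 2 ^ t := Nat.mul_le_mul_right _ hj.1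
      _ = 2 ^ (n + t) := (pow_add 2 n t).symm
  unfold dyadicDensity
  rw [div_mul_div_comm, ← pow_add]
  gcongr
  exact_mod_cast hcard

lemma one_sub_le_dyadicDensity_le_length_bitIndices {t k : ℕ} {g : ℝ} (hg : 0 < g)
    (hkg : k + g ≤ t / 2) :
    1 - t / (4 * g ^ 2) ≤ dyadicDensity t (k ≤ ·.bitIndices.length) := by
  set B := {r ∈ range (2 ^ t) | ¬ k ≤ r.bitIndices.length}
  have hB : #B * g ^ 2 ≤ t * 2 ^ t / 4 := by
    rw [← sum_sq_length_bitIndices_sub, ← nsmul_eq_mul]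
    refine (card_nsmul_le_sum _ _ _ fun r hr => ?_).trans
      (sum_le_sum_of_subset_of_nonneg (filter_subset _ _) fun _ _ _ => sq_nonneg _)
    have hr : (r.bitIndices.length : ℝ) + 1 ≤ k := by
      exact_mod_cast not_le.1 (mem_filter.1 hr).2
    nlinarith
  have hdens : dyadicDensity t (¬ k ≤ ·.bitIndices.length) ≤ t / (4 * g ^ 2) := by
    unfold dyadicDensity
    rw [div_le_div_iff₀ (by positivity) (by positivity)]
    nlinarith [pow_pos (two_pos (α := ℝ)) t]
  linarith [dyadicDensity_add_not (n := t) (p := (k ≤ ·.bitIndices.length))]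

lemma eventually_le_two_pow_floor {ε : ℝ} (hε : 0 < ε) : ∀ᶠ m : ℕ in atTop, m ≤ 2 ^ ⌊ε * m⌋₊ := by
  have hs : Tendsto (fun m : ℕ => ⌊ε * m⌋₊) atTop atTop :=
    tendsto_nat_floor_atTop.comp (tendsto_natCast_atTop_atTop.const_mul_atTop hε)
  have hexp : ∀ᶠ s : ℕ in atTop, (s : ℝ) ^ 1 / 2 ^ s < ε / 2 :=
    (tendsto_pow_const_div_const_pow_of_one_lt 1 one_lt_two).eventually (gt_mem_nhds (half_pos hε))
  filter_upwards [hs.eventually hexp, hs.eventually (eventually_ge_atTop 1)] with m hexp hs1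
  set s := ⌊ε * m⌋₊
  rw [pow_one, div_lt_iff₀ (by positivity)] at hexp
  have hs1' : (1 : ℝ) ≤ s := by exact_mod_cast hs1
  have hm : (m : ℝ) ≤ 2 ^ s := by
    have hfl := Nat.lt_floor_add_one (ε * m)
    nlinarith
  exact_mod_cast hm

/-- Erasure probabilities of the synthesized channels of a BEC with erasure probability `c`. -/
noncomputable def becZ (c : ℝ) : ℕ → ℕ → ℝ
  | 0, _ => c
  | m + 1, i =>
    if i % 2 = 0 then 2 * becZ c m (i / 2) - becZ c m (i / 2) ^ 2 else becZ c m (i / 2) ^ 2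

section becZ

variable {c : ℝ}

lemma becZ_succ_two_mul (m q : ℕ) :
    becZ c (m + 1) (2 * q) = 2 * becZ c m q - becZ c m q ^ 2 := by
  simp [becZ]

lemma becZ_succ_two_mul_add_one (m q : ℕ) : becZ c (m + 1) (2 * q + 1) = becZ c m q ^ 2 := by
  rw [becZ, if_neg (by omega), show (2 * q + 1) / 2 = q by omega]

lemma becZ_mem_Icc (hc : c ∈ Set.Icc 0 1) (m i : ℕ) : becZ c m i ∈ Set.Icc 0 1 := by
  induction m generalizing i with
  | zero => exact hc
  | succ m ih =>
    obtain ⟨h0, h1⟩ := ih (i / 2)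
    unfold becZ
    split_ifs <;> constructor <;> nlinarith

lemma sum_becZ (m : ℕ) : ∑ i ∈ range (2 ^ m), becZ c m i = 2 ^ m * c := by
  induction m with
  | zero => simp [becZ]
  | succ m ih =>
    simp only [sum_range_two_pow_succ, becZ_succ_two_mul, becZ_succ_two_mul_add_one,
      sub_add_cancel, ← mul_sum, ih]
    ring

lemma sqrt_mul_one_sub_polarize_le {z : ℝ} (h0 : 0 ≤ z) (h1 : z ≤ 1) :
    √((2 * z - z ^ 2) * (1 - (2 * z - z ^ 2))) + √(z ^ 2 * (1 - z ^ 2))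
      ≤ √3 * √(z * (1 - z)) := by
  have hA : 0 ≤ (2 - z) * (1 - z) := by nlinarith
  have hB : 0 ≤ z * (1 + z) := by nlinarith
  rw [show (2 * z - z ^ 2) * (1 - (2 * z - z ^ 2)) = z * (1 - z) * ((2 - z) * (1 - z)) by ring,
    show z ^ 2 * (1 - z ^ 2) = z * (1 - z) * (z * (1 + z)) by ring,
    Real.sqrt_mul (x := z * (1 - z)) (by nlinarith),
    Real.sqrt_mul (x := z * (1 - z)) (by nlinarith), ← mul_add, mul_comm]
  gcongr
  -- the product of the radicands regroups as `((2 - z) z) ((1 - z) (1 + z))`; AM-GM on these two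
  -- factors bounds the cross term so that the square of the sum is at most `3`
  have hAB : √((2 - z) * (1 - z)) * √(z * (1 + z)) ≤ (1 + 2 * z - 2 * z ^ 2) / 2 := by
    rw [← Real.sqrt_mul hA, Real.sqrt_le_left (by nlinarith)]
    nlinarith [sq_nonneg (1 - 2 * z)]
  rw [Real.le_sqrt (by positivity) (by norm_num), add_sq, Real.sq_sqrt hA, Real.sq_sqrt hB]
  nlinarith

lemma sum_sqrt_becZ_le (hc : c ∈ Set.Icc 0 1) (m : ℕ) :
    ∑ i ∈ range (2 ^ m), √(becZ c m i * (1 - becZ c m i)) ≤ √3 ^ m * √(c * (1 - c)) := by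
  induction m with
  | zero => simp [becZ]
  | succ m ih =>
    simp only [sum_range_two_pow_succ, becZ_succ_two_mul, becZ_succ_two_mul_add_one]
    calc _ ≤ ∑ q ∈ range (2 ^ m), √3 * √(becZ c m q * (1 - becZ c m q)) :=
          sum_le_sum fun q _ => sqrt_mul_one_sub_polarize_le (becZ_mem_Icc hc m q).1
            (becZ_mem_Icc hc m q).2
      _ ≤ √3 ^ (m + 1) * √(c * (1 - c)) := by
          rw [← mul_sum, pow_succ', mul_assoc]
          gcongr

lemma becZ_le_zpow (hc : c ∈ Set.Icc 0 1) {n j : ℕ} {e : ℤ} (h : becZ c n j ≤ 2 ^ e) {t r : ℕ}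
    (hr : r < 2 ^ t) :
    becZ c (n + t) (j * 2 ^ t + r)
      ≤ 2 ^ ((2 : ℤ) ^ r.bitIndices.length * (e + t - r.bitIndices.length)) := by
  induction t generalizing r with
  | zero => simpa [Nat.lt_one_iff.1 hr] using h
  | succ t ih =>
    obtain ⟨q, rfl | rfl⟩ := Nat.even_or_odd' r
    · have hq : q < 2 ^ t := by rw [pow_succ] at hr; omega
      have hZ := ih hq
      have h0 := (becZ_mem_Icc hc (n + t) (j * 2 ^ t + q)).1
      rw [show j * 2 ^ (t + 1) + 2 * q = 2 * (j * 2 ^ t + q) by ring, ← add_assoc,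
        becZ_succ_two_mul, Nat.bitIndices_two_mul, List.length_map]
      calc _ ≤ 2 * (2 : ℝ) ^ ((2 : ℤ) ^ q.bitIndices.length * (e + t - q.bitIndices.length)) := by
            nlinarith
        _ = 2 ^ ((2 : ℤ) ^ q.bitIndices.length * (e + t - q.bitIndices.length) + 1) := by
            rw [zpow_add_one₀ two_ne_zero, mul_comm]
        _ ≤ _ := by
            gcongr
            · norm_num
            · push_cast
              nlinarith [one_le_pow₀ (M₀ := ℤ) (n := q.bitIndices.length) one_le_two]
    · have hq : q < 2 ^ t := by rw [pow_succ] at hr; omega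
      have hZ := ih hq
      have h0 := (becZ_mem_Icc hc (n + t) (j * 2 ^ t + q)).1
      rw [show j * 2 ^ (t + 1) + (2 * q + 1) = 2 * (j * 2 ^ t + q) + 1 by ring, ← add_assoc,
        becZ_succ_two_mul_add_one, Nat.bitIndices_two_mul_add_one, List.length_cons,
        List.length_map]
      calc _ ≤ ((2 : ℝ) ^ ((2 : ℤ) ^ q.bitIndices.length * (e + t - q.bitIndices.length))) ^ 2 :=
            pow_le_pow_left₀ h0 hZ 2
        _ = _ := by
            rw [sq, ← zpow_add₀ two_ne_zero]
            push_cast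
            ring_nf

lemma dyadicDensity_becZ_le_mul_le (hc : c ∈ Set.Icc 0 1) {n t k : ℕ} {e e' : ℤ}
    (hk : e + t ≤ k) (he' : 2 ^ k * (e + t - k) ≤ e') :
    dyadicDensity n (becZ c n · ≤ 2 ^ e) * dyadicDensity t (k ≤ ·.bitIndices.length)
      ≤ dyadicDensity (n + t) (becZ c (n + t) · ≤ 2 ^ e') := by
  refine dyadicDensity_mul_le fun j _ hj r hr hkr =>
    (becZ_le_zpow hc hj hr).trans (zpow_le_zpow_right₀ one_le_two (le_trans ?_ he'))
  have hpow : (2 : ℤ) ^ k ≤ 2 ^ r.bitIndices.length := pow_le_pow_right₀ one_le_two hkr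
  have hkr' : (k : ℤ) ≤ r.bitIndices.length := by exact_mod_cast hkr
  nlinarith [mul_nonneg (pow_nonneg zero_le_two r.bitIndices.length) (sub_nonneg.2 hkr'),
    mul_nonpos_of_nonneg_of_nonpos (sub_nonneg.2 hpow) (sub_nonpos.2 hk)]

lemma card_lt_becZ_le (hc : c ∈ Set.Icc 0 1) {a δ : ℝ} (ha : 0 < a) (hδ : 0 < δ) (hδ1 : δ < 1)
    (n : ℕ) :
    (#{j ∈ range (2 ^ n) | a < becZ c n j} : ℝ) ≤ 2 ^ n * c / (1 - δ) + √3 ^ n / √(a * δ) := by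
  set f := fun j => becZ c n j / (1 - δ) + √(becZ c n j * (1 - becZ c n j)) / √(a * δ)
  -- a channel that is not yet good is either almost useless or has `z (1 - z) ≥ a δ`
  have hbad : ∀ j, a < becZ c n j → 1 ≤ f j := by
    intro j hj
    obtain ⟨hz0, hz1⟩ := becZ_mem_Icc hc n j
    by_cases hz : 1 - δ < becZ c n j
    · have : 1 ≤ becZ c n j / (1 - δ) := (one_le_div (by linarith)).2 hz.le
      have : 0 ≤ √(becZ c n j * (1 - becZ c n j)) / √(a * δ) := by positivity
      linarith
    · have : 1 ≤ √(becZ c n j * (1 - becZ c n j)) / √(a * δ) :=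
        (one_le_div (by positivity)).2
          (Real.sqrt_le_sqrt (mul_le_mul hj.le (by linarith) hδ.le hz0))
      have : 0 ≤ becZ c n j / (1 - δ) := div_nonneg hz0 (by linarith)
      linarith
  have hf : ∀ j, 0 ≤ f j := fun j =>
    add_nonneg (div_nonneg (becZ_mem_Icc hc n j).1 (by linarith)) (by positivity)
  calc (#{j ∈ range (2 ^ n) | a < becZ c n j} : ℝ)
      ≤ ∑ j ∈ range (2 ^ n) with a < becZ c n j, f j := by
        simpa using card_nsmul_le_sum _ f 1 fun j hj => hbad j (mem_filter.1 hj).2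
    _ ≤ ∑ j ∈ range (2 ^ n), f j := sum_le_sum_of_subset_of_nonneg (filter_subset _ _)
        fun j _ _ => hf j
    _ ≤ 2 ^ n * c / (1 - δ) + √3 ^ n * √(c * (1 - c)) / √(a * δ) := by
        simp only [f, sum_add_distrib, ← sum_div, sum_becZ]
        gcongr
        exact sum_sqrt_becZ_le hc n
    _ ≤ 2 ^ n * c / (1 - δ) + √3 ^ n / √(a * δ) := by
        gcongr
        exact mul_le_of_le_one_right (by positivity)
          (Real.sqrt_le_one.2 (by nlinarith [hc.1, hc.2]))

lemma one_sub_le_dyadicDensity_becZ_le (hc : c ∈ Set.Icc 0 1) {δ : ℝ} (hδ : 0 < δ) (hδ1 : δ < 1)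
    (u : ℕ) :
    1 - c / (1 - δ) - (27 / 32) ^ u / √δ
      ≤ dyadicDensity (6 * u) (becZ c (6 * u) · ≤ 2 ^ (-(2 * u : ℤ))) := by
  -- `√3 ^ (6u) / √(2 ^ (-2u)) = 54 ^ u = 64 ^ u * (27 / 32) ^ u`
  have hrate : √3 ^ (6 * u) / √(2 ^ (-(2 * u : ℤ)) * δ) = 2 ^ (6 * u) * ((27 / 32) ^ u / √δ) := by
    have hsqrt : √((2 : ℝ) ^ (-(2 * u : ℤ)) * δ) = √δ / 2 ^ u := by
      rw [Real.sqrt_mul' _ hδ.le, zpow_neg, show (2 * u : ℤ) = ((u * 2 : ℕ) : ℤ) by push_cast; ring,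
        zpow_natCast, pow_mul, ← inv_pow, Real.sqrt_sq (by positivity), div_eq_mul_inv, mul_comm]
    have h27 : √3 ^ (6 * u) = 27 ^ u := by
      rw [pow_mul, show √3 ^ 6 = (√3 ^ 2) ^ 3 by ring, Real.sq_sqrt (by norm_num)]
      norm_num
    have : 0 < √δ := Real.sqrt_pos.2 hδ
    rw [hsqrt, h27, pow_mul, div_pow]
    field_simp
    rw [← mul_pow]
    norm_num
  have hbad : dyadicDensity (6 * u) (¬ becZ c (6 * u) · ≤ 2 ^ (-(2 * u : ℤ)))
      ≤ c / (1 - δ) + (27 / 32) ^ u / √δ := by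
    refine (dyadicDensity_mono fun i _ h => not_le.1 h).trans ?_
    have hcount := card_lt_becZ_le hc (zpow_pos two_pos (-(2 * u : ℤ))) hδ hδ1 (6 * u)
    rw [hrate] at hcount
    unfold dyadicDensity
    rw [div_le_iff₀ (by positivity)]
    calc _ ≤ 2 ^ (6 * u) * c / (1 - δ) + 2 ^ (6 * u) * ((27 / 32) ^ u / √δ) := hcount
      _ = _ := by ring
  linarith [dyadicDensity_add_not (n := 6 * u) (p := (becZ c (6 * u) · ≤ 2 ^ (-(2 * u : ℤ))))]

lemma eventually_le_dyadicDensity_becZ_le (hc : c ∈ Set.Icc 0 1) {η : ℝ} (hη : 0 < η) :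
    ∀ᶠ u in atTop, 1 - c - η ≤ dyadicDensity (6 * u) (becZ c (6 * u) · ≤ 2 ^ (-(2 * u : ℤ))) := by
  set δ := min (η / 4) (1 / 2)
  have hδ : 0 < δ := lt_min (by positivity) one_half_pos
  have hδη : δ ≤ η / 4 := min_le_left _ _
  have hδ1 : δ ≤ 1 / 2 := min_le_right _ _
  have hcδ : c / (1 - δ) ≤ c + η / 2 := by
    rw [div_le_iff₀ (by linarith)]
    nlinarith [hc.1, hc.2]
  have hlim : Tendsto (fun u : ℕ => (27 / 32 : ℝ) ^ u / √δ) atTop (𝓝 0) := by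
    simpa using (tendsto_pow_atTop_nhds_zero_of_lt_one (by norm_num) (by norm_num)).div_const (√δ)
  filter_upwards [hlim.eventually (ge_mem_nhds (half_pos hη))] with u hu
  linarith [one_sub_le_dyadicDensity_becZ_le hc hδ (by linarith) u]

lemma mul_mul_le_dyadicDensity_becZ_lt (hc : c ∈ Set.Icc 0 1) {β : ℝ} {m s k : ℕ} (hs : 1 ≤ s)
    (hm : m ≤ 2 ^ s) (h16 : 16 * s ≤ m) (hk : β * m < k) :
    dyadicDensity (6 * (2 * s)) (becZ c (6 * (2 * s)) · ≤ 2 ^ (-(2 * ((2 * s : ℕ) : ℤ))))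
        * dyadicDensity (4 * s) (s ≤ ·.bitIndices.length)
        * dyadicDensity (m - 16 * s) (k ≤ ·.bitIndices.length)
      ≤ dyadicDensity m (becZ c m · < 2 ^ (-((2 : ℝ) ^ m) ^ β)) := by
  have hstage1 := dyadicDensity_becZ_le_mul_le hc (n := 6 * (2 * s)) (t := 4 * s) (k := s)
    (e := -(2 * ((2 * s : ℕ) : ℤ))) (e' := -m) (by push_cast; omega) (by
      have : (m : ℤ) ≤ 2 ^ s := by exact_mod_cast hm
      push_cast
      nlinarith)
  have hstage2 := dyadicDensity_becZ_le_mul_le hc (n := 6 * (2 * s) + 4 * s) (t := m - 16 * s)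
    (k := k) (e := -m) (e' := -2 ^ k) (by push_cast [h16]; omega) (by
      have : (1 : ℤ) ≤ 2 ^ k := one_le_pow₀ one_le_two
      push_cast [h16]
      nlinarith)
  rw [show 6 * (2 * s) + 4 * s + (m - 16 * s) = m by omega] at hstage2
  have hgood : dyadicDensity m (becZ c m · ≤ 2 ^ (-2 ^ k : ℤ))
      ≤ dyadicDensity m (becZ c m · < 2 ^ (-((2 : ℝ) ^ m) ^ β)) := by
    refine dyadicDensity_mono fun i _ hi => hi.trans_lt ?_
    rw [← Real.rpow_intCast, Real.rpow_lt_rpow_left_iff one_lt_two]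
    push_cast
    rw [neg_lt_neg_iff, ← Real.rpow_natCast 2 m, ← Real.rpow_mul zero_le_two,
      ← Real.rpow_natCast 2 k, mul_comm]
    exact Real.rpow_lt_rpow_of_exponent_lt one_lt_two hk
  calc _ ≤ _ * _ := mul_le_mul_of_nonneg_right hstage1 dyadicDensity_nonneg
    _ ≤ _ := hstage2
    _ ≤ _ := hgood

lemma eventually_le_dyadicDensity_becZ_lt (hc : c ∈ Set.Icc 0 1) {β : ℝ} (hβ : β < 1 / 2)
    {η : ℝ} (hη : 0 < η) :
    ∀ᶠ m in atTop, 1 - c - η ≤ dyadicDensity m (becZ c m · < 2 ^ (-((2 : ℝ) ^ m) ^ β)) := by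
  set β' := max β 0
  set ε := (1 / 2 - β') / 10
  have hε : 0 < ε := by have := max_lt hβ one_half_pos; simp only [ε]; linarith
  have hs : Tendsto (fun m : ℕ => ⌊ε * m⌋₊) atTop atTop :=
    tendsto_nat_floor_atTop.comp (tendsto_natCast_atTop_atTop.const_mul_atTop hε)
  have h2s : Tendsto (fun m : ℕ => 2 * ⌊ε * m⌋₊) atTop atTop :=
    tendsto_atTop_mono (fun m => Nat.le_mul_of_pos_left _ two_pos) hs
  have hm : Tendsto (fun m : ℕ => (m : ℝ)) atTop atTop := tendsto_natCast_atTop_atTop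
  filter_upwards [hs.eventually_ge_atTop 1,
    (tendsto_one_div_atTop_nhds_zero_nat.comp hs).eventually
      (ge_mem_nhds (by positivity : 0 < η / 3)),
    h2s.eventually (eventually_le_dyadicDensity_becZ_le hc (η := η / 3) (by positivity)),
    eventually_le_two_pow_floor hε, hm.eventually_ge_atTop (1 / ε),
    hm.eventually_ge_atTop (3 / (4 * ε ^ 2 * η))] with m hs1 hsη hP0 hm2s hεm hmη
  rw [Function.comp_apply] at hsη
  have hεm1 : 1 ≤ ε * m := by rwa [div_le_iff₀ hε, mul_comm] at hεm
  have hβ'm : β' * m = m / 2 - 10 * (ε * m) := by simp only [ε]; ring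
  set s := ⌊ε * m⌋₊
  set k := ⌊β' * m⌋₊ + 1
  have hsm : (s : ℝ) ≤ ε * m := Nat.floor_le (by positivity)
  have hkm : β' * m < k ∧ (k : ℝ) ≤ β' * m + 1 := by
    simp only [k]
    push_cast
    exact ⟨Nat.lt_floor_add_one _, by linarith [Nat.floor_le (by positivity : 0 ≤ β' * m)]⟩
  have h16 : 16 * s ≤ m := by
    have : (16 * s : ℝ) ≤ m := by nlinarith [le_max_right β 0]
    exact_mod_cast this
  have hQ1 : 1 - η / 3 ≤ dyadicDensity (4 * s) (s ≤ ·.bitIndices.length) := by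
    have hs0 : (0 : ℝ) < s := by exact_mod_cast hs1
    refine le_trans ?_ (one_sub_le_dyadicDensity_le_length_bitIndices hs0 (by push_cast; linarith))
    rw [show ((4 * s : ℕ) : ℝ) / (4 * s ^ 2) = 1 / s by field_simp; push_cast; ring]
    linarith
  have hQ2 : 1 - η / 3 ≤ dyadicDensity (m - 16 * s) (k ≤ ·.bitIndices.length) := by
    refine le_trans ?_ (one_sub_le_dyadicDensity_le_length_bitIndices (g := ε * m) (by linarith)
      (by push_cast [h16]; linarith))
    have ht : ((m - 16 * s : ℕ) : ℝ) ≤ m := by exact_mod_cast Nat.sub_le m (16 * s)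
    have : ((m - 16 * s : ℕ) : ℝ) / (4 * (ε * m) ^ 2) ≤ η / 3 := by
      rw [div_le_iff₀ (by positivity)] at hmη
      rw [div_le_iff₀ (by positivity)]
      nlinarith [mul_le_mul_of_nonneg_left hmη (Nat.cast_nonneg m : (0 : ℝ) ≤ m)]
    linarith
  refine le_trans ?_ (mul_mul_le_dyadicDensity_becZ_lt hc hs1 hm2s h16
    (by nlinarith [le_max_left β 0] : β * m < k))
  refine le_trans ?_ (sub_sub_le_mul_mul dyadicDensity_le_one dyadicDensity_nonneg
    dyadicDensity_le_one dyadicDensity_le_one)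
  linarith

end becZ

lemma le_becZ {ζ : ℕ → ℕ → ℝ} (h0 : ∀ m, ∀ i < 2 ^ m, 0 ≤ ζ m i) (h1 : ζ 0 0 ≤ 1)
    (hrec : ∀ m : ℕ, ∀ i < 2 ^ (m + 1),
      (i % 2 = 0 → ζ (m + 1) i ≤ 2 * ζ m (i / 2) - (ζ m (i / 2)) ^ 2) ∧
      (i % 2 = 1 → ζ (m + 1) i ≤ (ζ m (i / 2)) ^ 2))
    (m : ℕ) : ∀ i < 2 ^ m, ζ m i ≤ becZ (ζ 0 0) m i := by
  induction m with
  | zero =>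
    intro i hi
    rw [Nat.lt_one_iff.1 hi]
    rfl
  | succ m ih =>
    intro i hi
    have hq : i / 2 < 2 ^ m := by rw [pow_succ] at hi; omega
    have hle := ih _ hq
    have hζ := h0 m _ hq
    have hZ := (becZ_mem_Icc ⟨h0 0 0 one_pos, h1⟩ m (i / 2)).2
    unfold becZ
    split_ifs with hi2
    · nlinarith [(hrec m i hi).1 hi2]
    · nlinarith [(hrec m i hi).2 (by omega)]

end ZetaPolarization

open ZetaPolarization in
theorem zeta_polarization (ζ : ℕ → ℕ → ℝ)
    (hbound : ∀ m, ∀ i < 2 ^ m, ζ m i ∈ Set.Icc (0 : ℝ) 1)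
    (hrec : ∀ m : ℕ, ∀ i < 2 ^ (m + 1),
      (i % 2 = 0 → ζ (m + 1) i ≤ 2 * ζ m (i / 2) - (ζ m (i / 2)) ^ 2) ∧
      (i % 2 = 1 → ζ (m + 1) i ≤ (ζ m (i / 2)) ^ 2))
    (β : ℝ) (hβ : β < 1 / 2) :
    1 - ζ 0 0 ≤
      Filter.liminf
        (fun m : ℕ =>
          (((Finset.range (2 ^ m)).filter
              (fun i => ζ m i < (2 : ℝ) ^ (-(((2 : ℝ) ^ m) ^ β)))).card : ℝ)
            / (2 : ℝ) ^ m)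
        Filter.atTop := by
  show _ ≤ liminf (fun m => dyadicDensity m (ζ m · < (2 : ℝ) ^ (-((2 : ℝ) ^ m) ^ β))) atTop
  have hc : ζ 0 0 ∈ Set.Icc (0 : ℝ) 1 := hbound 0 0 (by norm_num)
  have hζ := le_becZ (fun m i hi => (hbound m i hi).1) hc.2 hrec
  have hbdd : IsBoundedUnder (· ≤ ·) atTop
      fun m => dyadicDensity m (ζ m · < (2 : ℝ) ^ (-((2 : ℝ) ^ m) ^ β)) :=
    isBoundedUnder_of ⟨1, fun m => dyadicDensity_le_one⟩
  refine le_of_forall_pos_le_add fun η hη => ?_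
  have := le_liminf_of_le hbdd.isCoboundedUnder_ge <|
    (eventually_le_dyadicDensity_becZ_lt hc hβ hη).mono fun m hm =>
      hm.trans (dyadicDensity_mono fun i hi h => (hζ m i hi).trans_lt h)
  linarith
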